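/- Let G₂(x,t) = x⁴ + 6(t² + 1)x² + 5t⁴ + 18t² − 3, H₂(x,t) = x⁴ + 2(t² − 3)x² + (t² + 5)(t² − 3), and D₂(x,t) = x⁶ + 3(t² + 1)x⁴ + 3(t² − 3)²x² + t⁶ + 27t⁴ + 99t² + 9. Then D₂(x,t) > 0 for all real x, t, and the function ψ₂(x,t) = (1 − 12·(G₂(x,t) + i·t·H₂(x,t))/D₂(x,t))·exp(it/2), regarded as a function ℝ² → ℂ, satisfies the focusing nonlinear Schrödinger equation i·ψ_t + ψ_xx + (1/2)|ψ|²·ψ = 0 for all (x,t) ∈ ℝ². -/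

import Mathlib

/-- Partial derivative in the first (space) variable, for complex-valued functions. -/
noncomputable def dXC (f : ℝ → ℝ → ℂ) : ℝ → ℝ → ℂ := fun x t => deriv (fun x' => f x' t) x

/-- Partial derivative in the second (time) variable, for complex-valued functions. -/
noncomputable def dTC (f : ℝ → ℝ → ℂ) : ℝ → ℝ → ℂ := fun x t => deriv (fun t' => f x t') t

/-- The focusing nonlinear Schrödinger equation `i ψ_t + ψ_xx + (1/2)|ψ|² ψ = 0`. -/
def IsFocusingNLSSolution (ψ : ℝ → ℝ → ℂ) : Prop :=
  ∀ x t : ℝ,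
    Complex.I * dTC ψ x t + dXC (dXC ψ) x t
      + (1 / 2) * ((‖ψ x t‖ : ℂ)) ^ 2 * ψ x t = 0

/-- `G₂(x,t) = x⁴ + 6(t²+1)x² + 5t⁴ + 18t² − 3`. -/
noncomputable def G2 (x t : ℝ) : ℝ :=
  x ^ 4 + 6 * (t ^ 2 + 1) * x ^ 2 + 5 * t ^ 4 + 18 * t ^ 2 - 3

/-- `H₂(x,t) = x⁴ + 2(t²−3)x² + (t²+5)(t²−3)`. -/
noncomputable def H2 (x t : ℝ) : ℝ :=
  x ^ 4 + 2 * (t ^ 2 - 3) * x ^ 2 + (t ^ 2 + 5) * (t ^ 2 - 3)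

/-- `D₂(x,t) = x⁶ + 3(t²+1)x⁴ + 3(t²−3)²x² + t⁶ + 27t⁴ + 99t² + 9`. -/
noncomputable def D2 (x t : ℝ) : ℝ :=
  x ^ 6 + 3 * (t ^ 2 + 1) * x ^ 4 + 3 * (t ^ 2 - 3) ^ 2 * x ^ 2
    + t ^ 6 + 27 * t ^ 4 + 99 * t ^ 2 + 9

/-- The second rational solution `ψ₂` of the focusing NLS equation. -/
noncomputable def psi2 (x t : ℝ) : ℂ :=
  (1 - 12 * (((G2 x t : ℝ) : ℂ) + Complex.I * (t : ℂ) * ((H2 x t : ℝ) : ℂ))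
      / ((D2 x t : ℝ) : ℂ)) * Complex.exp (Complex.I * (t : ℂ) / 2)

/-!
Write `ψ₂ = (g / f) e^{it/2}` with `f = D₂` real and `g = D₂ - 12 (G₂ + i t H₂)`. Times `f³ e^{-it/2}`,
the left side of the NLS equation becomes
`f · (i D_t + D_x²) g·f + g · ((|g|² - f²) / 2 - D_x² f·f)`
in Hirota's bilinear derivatives, so `ψ₂` is a solution as soon as `(i D_t + D_x²) g·f = 0` and
`2 D_x² f·f = |g|² - f²`. For `ψ₂` these are polynomial identities of degree 12.
-/

open Complex

section Phase

variable {q : ℝ → ℝ → ℂ}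

lemma hasDerivAt_exp_I_mul_div_two (t : ℝ) :
    HasDerivAt (fun s : ℝ => exp (I * s / 2)) (exp (I * t / 2) * (I / 2)) t := by
  simpa using (((hasDerivAt_id (t : ℂ)).const_mul I).div_const 2).cexp.comp_ofReal

lemma norm_exp_I_mul_div_two (t : ℝ) : ‖exp (I * t / 2)‖ = 1 := by
  rw [show I * t / 2 = ((t / 2 : ℝ) : ℂ) * I by push_cast; ring, norm_exp_ofReal_mul_I]

lemma dXC_mul_exp (hq : ∀ t, Differentiable ℝ (q · t)) :
    dXC (fun x t => q x t * exp (I * t / 2)) = fun x t => dXC q x t * exp (I * t / 2) := by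
  ext x t
  exact ((hq t x).hasDerivAt.mul_const _).deriv

lemma dTC_mul_exp (hq : ∀ x, Differentiable ℝ (q x ·)) (x t : ℝ) :
    dTC (fun x t => q x t * exp (I * t / 2)) x t
      = (dTC q x t + q x t * (I / 2)) * exp (I * t / 2) := by
  simp only [dTC]
  rw [((hq x t).hasDerivAt.fun_mul (hasDerivAt_exp_I_mul_div_two t)).deriv]
  ring

theorem isFocusingNLSSolution_mul_exp_iff (hq : ∀ t, Differentiable ℝ (q · t))
    (hqx : ∀ t, Differentiable ℝ (dXC q · t)) (hqt : ∀ x, Differentiable ℝ (q x ·)) :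
    IsFocusingNLSSolution (fun x t => q x t * exp (I * t / 2)) ↔
      ∀ x t, I * dTC q x t - q x t / 2 + dXC (dXC q) x t
        + 1 / 2 * (‖q x t‖ : ℂ) ^ 2 * q x t = 0 := by
  have hψ (x t : ℝ) :
      I * dTC (fun x t => q x t * exp (I * t / 2)) x t
          + dXC (dXC fun x t => q x t * exp (I * t / 2)) x t
          + 1 / 2 * (‖q x t * exp (I * t / 2)‖ : ℂ) ^ 2 * (q x t * exp (I * t / 2))
        = (I * dTC q x t - q x t / 2 + dXC (dXC q) x t + 1 / 2 * (‖q x t‖ : ℂ) ^ 2 * q x t)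
          * exp (I * t / 2) := by
    rw [dTC_mul_exp hqt, dXC_mul_exp hq, dXC_mul_exp hqx, norm_mul, norm_exp_I_mul_div_two,
      mul_one]
    linear_combination q x t * exp (I * t / 2) / 2 * I_sq
  simp only [IsFocusingNLSSolution, hψ, mul_eq_zero, exp_ne_zero, or_false]

end Phase

noncomputable def dX (f : ℝ → ℝ → ℝ) : ℝ → ℝ → ℝ := fun x t => deriv (fun x' => f x' t) x

noncomputable def dT (f : ℝ → ℝ → ℝ) : ℝ → ℝ → ℝ := fun x t => deriv (fun t' => f x t') t

/-- Hirota's bilinear derivative `D_x² a·b`. -/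
noncomputable def hirotaXX (a b : ℝ → ℝ → ℝ) (x t : ℝ) : ℝ :=
  dX (dX a) x t * b x t - 2 * dX a x t * dX b x t + a x t * dX (dX b) x t

/-- Hirota's bilinear derivative `D_t a·b`. -/
noncomputable def hirotaT (a b : ℝ → ℝ → ℝ) (x t : ℝ) : ℝ := dT a x t * b x t - a x t * dT b x t

noncomputable def ofReIm (u v : ℝ → ℝ → ℝ) (x t : ℝ) : ℂ := u x t + v x t * I

lemma HasDerivAt.ofReal_add_mul_I {a b : ℝ → ℝ} {a' b' x : ℝ} (ha : HasDerivAt a a' x)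
    (hb : HasDerivAt b b' x) :
    HasDerivAt (fun y => (a y : ℂ) + b y * I) (a' + b' * I) x :=
  ha.ofReal_comp.add (hb.ofReal_comp.mul_const I)

lemma sq_norm_ofReIm_div (u v f : ℝ → ℝ → ℝ) (x t : ℝ) :
    ‖ofReIm u v x t / f x t‖ ^ 2 = (u x t ^ 2 + v x t ^ 2) / f x t ^ 2 := by
  rw [norm_div, div_pow, ofReIm, Complex.sq_norm, normSq_add_mul_I, norm_real, Real.norm_eq_abs,
    sq_abs]

section Hirota

variable {u v f : ℝ → ℝ → ℝ}

lemma hasDerivAt_dX {t : ℝ} (hu : ContDiff ℝ 2 (u · t)) (x : ℝ) :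
    HasDerivAt (u · t) (dX u x t) x :=
  (hu.differentiable (by norm_num) x).hasDerivAt

lemma hasDerivAt_dX_dX {t : ℝ} (hu : ContDiff ℝ 2 (u · t)) (x : ℝ) :
    HasDerivAt (dX u · t) (dX (dX u) x t) x :=
  ((contDiff_succ_iff_deriv.1 hu).2.2.differentiable one_ne_zero x).hasDerivAt

lemma hasDerivAt_ofReIm_div_x {t : ℝ} (hu : ContDiff ℝ 2 (u · t)) (hv : ContDiff ℝ 2 (v · t))
    (hf : ContDiff ℝ 2 (f · t)) (hf0 : ∀ x, f x t ≠ 0) (x : ℝ) :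
    HasDerivAt (fun x => ofReIm u v x t / f x t)
      ((ofReIm (dX u) (dX v) x t * f x t - ofReIm u v x t * dX f x t) / f x t ^ 2) x :=
  ((hasDerivAt_dX hu x).ofReal_add_mul_I (hasDerivAt_dX hv x)).fun_div
    (hasDerivAt_dX hf x).ofReal_comp (by exact_mod_cast hf0 x)

lemma dXC_ofReIm_div (hu : ∀ t, ContDiff ℝ 2 (u · t)) (hv : ∀ t, ContDiff ℝ 2 (v · t))
    (hf : ∀ t, ContDiff ℝ 2 (f · t)) (hf0 : ∀ x t, f x t ≠ 0) :
    dXC (fun x t => ofReIm u v x t / f x t) = fun x t =>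
      (ofReIm (dX u) (dX v) x t * f x t - ofReIm u v x t * dX f x t) / f x t ^ 2 := by
  ext x t
  exact (hasDerivAt_ofReIm_div_x (hu t) (hv t) (hf t) (hf0 · t) x).deriv

lemma hasDerivAt_dXC_ofReIm_div_x {t : ℝ} (hu : ContDiff ℝ 2 (u · t))
    (hv : ContDiff ℝ 2 (v · t)) (hf : ContDiff ℝ 2 (f · t)) (hf0 : ∀ x, f x t ≠ 0) (x : ℝ) :
    HasDerivAt
      (fun x => (ofReIm (dX u) (dX v) x t * f x t - ofReIm u v x t * dX f x t) / f x t ^ 2)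
      ((ofReIm (dX (dX u)) (dX (dX v)) x t * f x t ^ 2
        - 2 * ofReIm (dX u) (dX v) x t * f x t * dX f x t
        - ofReIm u v x t * f x t * dX (dX f) x t
        + 2 * ofReIm u v x t * dX f x t ^ 2) / f x t ^ 3) x := by
  have hg := (hasDerivAt_dX hu x).ofReal_add_mul_I (hasDerivAt_dX hv x)
  have hgx := (hasDerivAt_dX_dX hu x).ofReal_add_mul_I (hasDerivAt_dX_dX hv x)
  have hF := (hasDerivAt_dX hf x).ofReal_comp
  have hFx := (hasDerivAt_dX_dX hf x).ofReal_comp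
  have hF0 : (f x t : ℂ) ≠ 0 := by exact_mod_cast hf0 x
  refine (((hgx.fun_mul hF).fun_sub (hg.fun_mul hFx)).fun_div (hF.fun_pow 2)
    (pow_ne_zero 2 hF0)).congr_deriv ?_
  simp only [ofReIm]
  field_simp
  ring

lemma hasDerivAt_ofReIm_div_t {x : ℝ} (hu : Differentiable ℝ (u x ·))
    (hv : Differentiable ℝ (v x ·)) (hf : Differentiable ℝ (f x ·)) (hf0 : ∀ t, f x t ≠ 0)
    (t : ℝ) :
    HasDerivAt (fun t => ofReIm u v x t / f x t)
      ((ofReIm (dT u) (dT v) x t * f x t - ofReIm u v x t * dT f x t) / f x t ^ 2) t :=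
  ((hu t).hasDerivAt.ofReal_add_mul_I (hv t).hasDerivAt).fun_div
    (hf t).hasDerivAt.ofReal_comp (by exact_mod_cast hf0 t)

theorem isFocusingNLSSolution_of_hirota (hu : ∀ t, ContDiff ℝ 2 (u · t))
    (hv : ∀ t, ContDiff ℝ 2 (v · t)) (hf : ∀ t, ContDiff ℝ 2 (f · t))
    (hut : ∀ x, Differentiable ℝ (u x ·)) (hvt : ∀ x, Differentiable ℝ (v x ·))
    (hft : ∀ x, Differentiable ℝ (f x ·)) (hf0 : ∀ x t, f x t ≠ 0)
    (hre : ∀ x t, hirotaXX u f x t = hirotaT v f x t)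
    (him : ∀ x t, hirotaXX v f x t + hirotaT u f x t = 0)
    (hff : ∀ x t, 2 * hirotaXX f f x t = u x t ^ 2 + v x t ^ 2 - f x t ^ 2) :
    IsFocusingNLSSolution (fun x t => ofReIm u v x t / f x t * exp (I * t / 2)) := by
  have hqx (t : ℝ) := hasDerivAt_ofReIm_div_x (hu t) (hv t) (hf t) (hf0 · t)
  have hqxx (t : ℝ) := hasDerivAt_dXC_ofReIm_div_x (hu t) (hv t) (hf t) (hf0 · t)
  have hqt (x : ℝ) := hasDerivAt_ofReIm_div_t (hut x) (hvt x) (hft x) (hf0 x)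
  have hdXC := dXC_ofReIm_div hu hv hf hf0
  rw [isFocusingNLSSolution_mul_exp_iff (fun t x => (hqx t x).differentiableAt)
    (fun t x => hdXC ▸ (hqxx t x).differentiableAt) (fun x t => (hqt x t).differentiableAt)]
  intro x t
  have hnorm : (‖ofReIm u v x t / f x t‖ : ℂ) ^ 2 = ((u x t ^ 2 + v x t ^ 2) / f x t ^ 2 : ℝ) := by
    rw [← sq_norm_ofReIm_div]; push_cast; rfl
  have hre' : ((hirotaXX u f x t : ℝ) : ℂ) = hirotaT v f x t := congrArg _ (hre x t)
  have him' : ((hirotaXX v f x t + hirotaT u f x t : ℝ) : ℂ) = 0 := by exact_mod_cast him x t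
  have hff' : ((2 * hirotaXX f f x t : ℝ) : ℂ) = ((u x t ^ 2 + v x t ^ 2 - f x t ^ 2 : ℝ) : ℂ) :=
    congrArg _ (hff x t)
  have hF0 : (f x t : ℂ) ≠ 0 := by exact_mod_cast hf0 x t
  rw [dTC, (hqt x t).deriv, hdXC, dXC, (hqxx t x).deriv, hnorm]
  simp only [hirotaXX, hirotaT, ofReIm] at hre' him' hff' ⊢
  push_cast at hre' him' hff' ⊢
  field_simp
  linear_combination 2 * (f x t : ℂ) * hre' + 2 * I * (f x t : ℂ) * him'
    - (u x t + I * v x t : ℂ) * hff'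
    + 2 * (f x t : ℂ) * (f x t * dT v x t - v x t * dT f x t) * I_sq

end Hirota

noncomputable def psi2NumRe (x t : ℝ) : ℝ := D2 x t - 12 * G2 x t

noncomputable def psi2NumIm (x t : ℝ) : ℝ := -(12 * t * H2 x t)

lemma D2_pos (x t : ℝ) : 0 < D2 x t := by
  unfold D2
  positivity

lemma psi2_eq_ofReIm_div :
    psi2 = fun x t => ofReIm psi2NumRe psi2NumIm x t / D2 x t * exp (I * t / 2) := by
  ext x t
  have hD : (D2 x t : ℂ) ≠ 0 := by exact_mod_cast (D2_pos x t).ne'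
  simp only [psi2, ofReIm, psi2NumRe, psi2NumIm]
  field_simp
  push_cast
  ring

lemma hirotaXX_psi2NumRe (x t : ℝ) : hirotaXX psi2NumRe D2 x t = hirotaT psi2NumIm D2 x t := by
  simp (disch := fun_prop) [hirotaXX, hirotaT, dX, dT, psi2NumRe, psi2NumIm, D2, G2, H2]
  ring

lemma hirotaXX_psi2NumIm_add_hirotaT (x t : ℝ) :
    hirotaXX psi2NumIm D2 x t + hirotaT psi2NumRe D2 x t = 0 := by
  simp (disch := fun_prop) [hirotaXX, hirotaT, dX, dT, psi2NumRe, psi2NumIm, D2, G2, H2]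
  ring

lemma two_mul_hirotaXX_D2 (x t : ℝ) :
    2 * hirotaXX D2 D2 x t = psi2NumRe x t ^ 2 + psi2NumIm x t ^ 2 - D2 x t ^ 2 := by
  simp (disch := fun_prop) [hirotaXX, dX, psi2NumRe, psi2NumIm, D2, G2, H2]
  ring

theorem psi2_solves_NLS :
    (∀ x t : ℝ, 0 < D2 x t) ∧ IsFocusingNLSSolution psi2 := by
  refine ⟨D2_pos, psi2_eq_ofReIm_div ▸ isFocusingNLSSolution_of_hirota ?_ ?_ ?_ ?_ ?_ ?_
    (fun x t => (D2_pos x t).ne') hirotaXX_psi2NumRe hirotaXX_psi2NumIm_add_hirotaT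
    two_mul_hirotaXX_D2⟩ <;>
  · intro
    simp only [psi2NumRe, psi2NumIm, D2, G2, H2]
    fun_prop
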